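/- arXiv:2008.12261 — 2 statements merged into one kernel-verified Lean document; each statement's English description precedes it below -/
import Mathlib

section
/- Let R be a commutative integral domain (with 1 ≠ 0), let 𝓡 be the subring of 7×7 matrices over R (rows and columns indexed 0,…,6) consisting of matrices with all diagonal entries equal to a common α ∈ R; entries (0,1)=a, (0,2)=b, (0,3)=c, (0,4)=d, (0,5)=e, (0,6)=f; entry (1,3)=b; entry (1,6)=d; entry (2,6)=e; entry (4,6)=a; entry (5,6)=b; all other off-diagonal entries zero. Let J be the subset of 𝓡 consisting of all matrices with entries (0,1)=a, (4,6)=a, (0,6)=f for a, f ∈ R and all other entries zero. Then J is a left ideal of 𝓡 and J is not a two-sided ideal of 𝓡. -/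
/-- An additive subgroup of a ring is a right ideal if it is closed under
right multiplication by arbitrary ring elements. -/
def IsRightIdeal {S : Type*} [Ring S] (I : AddSubgroup S) : Prop :=
  ∀ x ∈ I, ∀ r : S, x * r ∈ I

/-- An additive subgroup of a ring is a left ideal if it is closed under
left multiplication by arbitrary ring elements. -/
def IsLeftIdeal {S : Type*} [Ring S] (I : AddSubgroup S) : Prop :=
  ∀ x ∈ I, ∀ r : S, r * x ∈ I

/-- The matrix of Example 2.4: diagonal `α`, first row `(α, a, b, c, d, e, f)`,
entries `(1,3) = b`, `(1,6) = d`, `(2,6) = e`, `(4,6) = a`, `(5,6) = b`, other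
off-diagonal entries zero. -/
def exMat {R : Type*} [CommRing R] (α a b c d e f : R) : Matrix (Fin 7) (Fin 7) R :=
  !![α, a, b, c, d, e, f;
     0, α, 0, b, 0, 0, d;
     0, 0, α, 0, 0, 0, e;
     0, 0, 0, α, 0, 0, 0;
     0, 0, 0, 0, α, 0, a;
     0, 0, 0, 0, 0, α, b;
     0, 0, 0, 0, 0, 0, α]

/-- The set of all matrices of the form `exMat α a b c d e f`. -/
def exSet (R : Type*) [CommRing R] : Set (Matrix (Fin 7) (Fin 7) R) :=
  {M | ∃ α a b c d e f : R, M = exMat α a b c d e f}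

/-- The matrix of the left ideal `J` in Example 2.4: entries `(0,1) = a`,
`(4,6) = a`, `(0,6) = f`, all other entries zero. -/
def jMat {R : Type*} [CommRing R] (a f : R) : Matrix (Fin 7) (Fin 7) R :=
  !![0, a, 0, 0, 0, 0, f;
     0, 0, 0, 0, 0, 0, 0;
     0, 0, 0, 0, 0, 0, 0;
     0, 0, 0, 0, 0, 0, 0;
     0, 0, 0, 0, 0, 0, a;
     0, 0, 0, 0, 0, 0, 0;
     0, 0, 0, 0, 0, 0, 0]

section Aux


@[simp] lemma cv6_5 {α : Type*} (x : α) (v : Fin 5 → α) : Matrix.vecCons x v (5 : Fin 6) = v 4 := rfl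
@[simp] lemma cv6_4 {α : Type*} (x : α) (v : Fin 5 → α) : Matrix.vecCons x v (4 : Fin 6) = v 3 := rfl
@[simp] lemma cv5_4 {α : Type*} (x : α) (v : Fin 4 → α) : Matrix.vecCons x v (4 : Fin 5) = v 3 := rfl
@[simp] lemma cv5_3 {α : Type*} (x : α) (v : Fin 4 → α) : Matrix.vecCons x v (3 : Fin 5) = v 2 := rfl
@[simp] lemma cv4_3 {α : Type*} (x : α) (v : Fin 3 → α) : Matrix.vecCons x v (3 : Fin 4) = v 2 := rfl
@[simp] lemma cv3_2 {α : Type*} (x : α) (v : Fin 2 → α) : Matrix.vecCons x v (2 : Fin 3) = v 1 := rfl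
@[simp] lemma cv7_4 {α : Type*} (x : α) (v : Fin 6 → α) : Matrix.vecCons x v (4 : Fin 7) = v 3 := rfl
@[simp] lemma cv7_3 {α : Type*} (x : α) (v : Fin 6 → α) : Matrix.vecCons x v (3 : Fin 7) = v 2 := rfl
@[simp] lemma cv7_2 {α : Type*} (x : α) (v : Fin 6 → α) : Matrix.vecCons x v (2 : Fin 7) = v 1 := rfl
@[simp] lemma cv7_5 {α : Type*} (x : α) (v : Fin 6 → α) : Matrix.vecCons x v (5 : Fin 7) = v 4 := rfl
@[simp] lemma cv7_6 {α : Type*} (x : α) (v : Fin 6 → α) : Matrix.vecCons x v (6 : Fin 7) = v 5 := rfl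

variable {R : Type*} [CommRing R]


lemma jMat_add (a f a' f' : R) : jMat a f + jMat a' f' = jMat (a + a') (f + f') := by
  ext i j; fin_cases i <;> fin_cases j <;> simp [jMat, Matrix.vecHead, Matrix.vecTail]

lemma jMat_neg (a f : R) : -jMat a f = jMat (-a) (-f) := by
  ext i j; fin_cases i <;> fin_cases j <;> simp [jMat, Matrix.vecHead, Matrix.vecTail]

lemma jMat_zero : (jMat 0 0 : Matrix (Fin 7) (Fin 7) R) = 0 := by
  ext i j; fin_cases i <;> fin_cases j <;> simp [jMat, Matrix.vecHead, Matrix.vecTail]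

lemma jMat_eq_exMat (a f : R) : jMat a f = exMat 0 a 0 0 0 0 f := by
  ext i j; fin_cases i <;> fin_cases j <;> simp [jMat, exMat, Matrix.vecHead, Matrix.vecTail]

set_option maxHeartbeats 1000000 in
lemma exMat_mul_jMat (α a b c d e f a' f' : R) :
    exMat α a b c d e f * jMat a' f' = jMat (α * a') (α * f' + d * a') := by
  ext i j; fin_cases i <;> fin_cases j <;>
    simp [jMat, exMat, Matrix.mul_apply, Fin.sum_univ_seven, Matrix.vecHead, Matrix.vecTail]

lemma jMat_mul_exMat_03 (a f α a' b c d e f' : R) :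
    (jMat a f * exMat α a' b c d e f') 0 3 = a * b := by
  simp [jMat, exMat, Matrix.mul_apply, Fin.sum_univ_seven, Matrix.vecHead, Matrix.vecTail]

end Aux

/-- Example 2.4 (fourth part): in the subring `𝓡` of `M₇(R)` with carrier `exSet R`,
the set of matrices `jMat a f` is a left ideal which is not a two-sided ideal. -/
theorem exSet_subring_has_left_ideal_not_ideal
    (R : Type*) [CommRing R] [IsDomain R]
    (𝓡 : Subring (Matrix (Fin 7) (Fin 7) R))
    (h𝓡 : (𝓡 : Set (Matrix (Fin 7) (Fin 7) R)) = exSet R) :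
    ∃ J : AddSubgroup 𝓡,
      (J : Set 𝓡) = {x : 𝓡 | ∃ a f : R, (x : Matrix (Fin 7) (Fin 7) R) = jMat a f} ∧
      IsLeftIdeal J ∧ ¬ IsRightIdeal J := by

  have hmem : ∀ M : Matrix (Fin 7) (Fin 7) R, M ∈ 𝓡 ↔ M ∈ exSet R := fun M => by
    rw [← SetLike.mem_coe, h𝓡]
  have hJ : ∀ a f : R, (jMat a f : Matrix (Fin 7) (Fin 7) R) ∈ 𝓡 := fun a f =>
    (hmem _).2 ⟨0, a, 0, 0, 0, 0, f, jMat_eq_exMat a f⟩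
  refine ⟨{ carrier := {x : 𝓡 | ∃ a f : R, (x : Matrix (Fin 7) (Fin 7) R) = jMat a f}
            add_mem' := ?_
            zero_mem' := ⟨0, 0, by simp [jMat_zero]⟩
            neg_mem' := ?_ }, rfl, ?_, ?_⟩
  · rintro x y ⟨a, f, hx⟩ ⟨a', f', hy⟩
    exact ⟨a + a', f + f', by (push_cast [hx, hy, jMat_add]; rfl)⟩
  · rintro x ⟨a, f, hx⟩
    exact ⟨-a, -f, by (push_cast [hx, jMat_neg]; rfl)⟩
  · rintro x ⟨a', f', hx⟩ r
    obtain ⟨α, a, b, c, d, e, f, hr⟩ := (hmem _).1 r.2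
    exact ⟨α * a', α * f' + d * a', by (push_cast [hx, hr, exMat_mul_jMat]; rfl)⟩
  · intro h
    obtain ⟨a, f, hp⟩ := h ⟨jMat 1 0, hJ 1 0⟩ ⟨1, 0, rfl⟩
      ⟨exMat 0 0 1 0 0 0 0, (hmem _).2 ⟨0, 0, 1, 0, 0, 0, 0, rfl⟩⟩
    have h03 := congrFun (congrFun hp 0) 3
    rw [show ((⟨jMat 1 0, hJ 1 0⟩ * ⟨exMat 0 0 1 0 0 0 0, _⟩ : 𝓡) : Matrix (Fin 7) (Fin 7) R)
        = jMat 1 0 * exMat 0 0 1 0 0 0 0 from rfl, jMat_mul_exMat_03] at h03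
    simp [jMat] at h03
end

section
/- There exists a ring 𝓡 whose additive group is torsion-free of finite rank such that 𝓡 is centrally essential, 𝓡 has a right ideal that is not a two-sided ideal, and 𝓡 has a left ideal that is not a two-sided ideal (so a centrally essential torsion-free ring of finite rank need not be right invariant or left invariant). -/
open TensorProduct

/-- A ring `S` is *centrally essential* if for every nonzero `a : S` there exist
nonzero central elements `x, y` with `a * x = y`. -/
def IsCentrallyEssential (S : Type*) [Ring S] : Prop :=
  ∀ a : S, a ≠ 0 → ∃ x y : S, x ∈ Subring.center S ∧ y ∈ Subring.center S ∧
    x ≠ 0 ∧ y ≠ 0 ∧ a * x = y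

/-- The exterior algebra over `ℤ` on three generators, as explicit 8-tuples:
coordinates are the coefficients of `1, e₁, e₂, e₃, e₁e₂, e₁e₃, e₂e₃, e₁e₂e₃`. -/
@[ext] structure EA where

  x0 : ℤ
  x1 : ℤ
  x2 : ℤ
  x3 : ℤ
  x4 : ℤ
  x5 : ℤ
  x6 : ℤ
  x7 : ℤ

namespace EA

instance : Zero EA := ⟨⟨0, 0, 0, 0, 0, 0, 0, 0⟩⟩
instance : One EA := ⟨⟨1, 0, 0, 0, 0, 0, 0, 0⟩⟩
instance : Add EA := ⟨fun a b => ⟨a.x0 + b.x0, a.x1 + b.x1, a.x2 + b.x2, a.x3 + b.x3, a.x4 + b.x4, a.x5 + b.x5, a.x6 + b.x6, a.x7 + b.x7⟩⟩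
instance : Neg EA := ⟨fun a => ⟨-a.x0, -a.x1, -a.x2, -a.x3, -a.x4, -a.x5, -a.x6, -a.x7⟩⟩
instance : Mul EA := ⟨fun a b => ⟨a.x0*b.x0, a.x0*b.x1 + a.x1*b.x0, a.x0*b.x2 + a.x2*b.x0, a.x0*b.x3 + a.x3*b.x0, a.x0*b.x4 + a.x4*b.x0 + a.x1*b.x2 - a.x2*b.x1, a.x0*b.x5 + a.x5*b.x0 + a.x1*b.x3 - a.x3*b.x1, a.x0*b.x6 + a.x6*b.x0 + a.x2*b.x3 - a.x3*b.x2, a.x0*b.x7 + a.x7*b.x0 + a.x1*b.x6 - a.x2*b.x5 + a.x3*b.x4 + a.x4*b.x3 - a.x5*b.x2 + a.x6*b.x1⟩⟩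

/-- Natural scalar multiple, coordinatewise. -/
def nsmulE (n : ℕ) (a : EA) : EA := ⟨(n : ℤ) * a.x0, (n : ℤ) * a.x1, (n : ℤ) * a.x2, (n : ℤ) * a.x3, (n : ℤ) * a.x4, (n : ℤ) * a.x5, (n : ℤ) * a.x6, (n : ℤ) * a.x7⟩

/-- Integer scalar multiple, coordinatewise. -/
def zsmulE (n : ℤ) (a : EA) : EA := ⟨n * a.x0, n * a.x1, n * a.x2, n * a.x3, n * a.x4, n * a.x5, n * a.x6, n * a.x7⟩

@[simp] lemma zero_x0 : (0 : EA).x0 = 0 := rfl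
@[simp] lemma zero_x1 : (0 : EA).x1 = 0 := rfl
@[simp] lemma zero_x2 : (0 : EA).x2 = 0 := rfl
@[simp] lemma zero_x3 : (0 : EA).x3 = 0 := rfl
@[simp] lemma zero_x4 : (0 : EA).x4 = 0 := rfl
@[simp] lemma zero_x5 : (0 : EA).x5 = 0 := rfl
@[simp] lemma zero_x6 : (0 : EA).x6 = 0 := rfl
@[simp] lemma zero_x7 : (0 : EA).x7 = 0 := rfl
@[simp] lemma one_x0 : (1 : EA).x0 = 1 := rfl
@[simp] lemma one_x1 : (1 : EA).x1 = 0 := rfl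
@[simp] lemma one_x2 : (1 : EA).x2 = 0 := rfl
@[simp] lemma one_x3 : (1 : EA).x3 = 0 := rfl
@[simp] lemma one_x4 : (1 : EA).x4 = 0 := rfl
@[simp] lemma one_x5 : (1 : EA).x5 = 0 := rfl
@[simp] lemma one_x6 : (1 : EA).x6 = 0 := rfl
@[simp] lemma one_x7 : (1 : EA).x7 = 0 := rfl
@[simp] lemma add_x0 (a b : EA) : (a + b).x0 = a.x0 + b.x0 := rfl
@[simp] lemma add_x1 (a b : EA) : (a + b).x1 = a.x1 + b.x1 := rfl
@[simp] lemma add_x2 (a b : EA) : (a + b).x2 = a.x2 + b.x2 := rfl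
@[simp] lemma add_x3 (a b : EA) : (a + b).x3 = a.x3 + b.x3 := rfl
@[simp] lemma add_x4 (a b : EA) : (a + b).x4 = a.x4 + b.x4 := rfl
@[simp] lemma add_x5 (a b : EA) : (a + b).x5 = a.x5 + b.x5 := rfl
@[simp] lemma add_x6 (a b : EA) : (a + b).x6 = a.x6 + b.x6 := rfl
@[simp] lemma add_x7 (a b : EA) : (a + b).x7 = a.x7 + b.x7 := rfl
@[simp] lemma neg_x0 (a : EA) : (-a).x0 = -a.x0 := rfl
@[simp] lemma neg_x1 (a : EA) : (-a).x1 = -a.x1 := rfl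
@[simp] lemma neg_x2 (a : EA) : (-a).x2 = -a.x2 := rfl
@[simp] lemma neg_x3 (a : EA) : (-a).x3 = -a.x3 := rfl
@[simp] lemma neg_x4 (a : EA) : (-a).x4 = -a.x4 := rfl
@[simp] lemma neg_x5 (a : EA) : (-a).x5 = -a.x5 := rfl
@[simp] lemma neg_x6 (a : EA) : (-a).x6 = -a.x6 := rfl
@[simp] lemma neg_x7 (a : EA) : (-a).x7 = -a.x7 := rfl
@[simp] lemma mul_x0 (a b : EA) : (a * b).x0 = a.x0*b.x0 := rfl
@[simp] lemma mul_x1 (a b : EA) : (a * b).x1 = a.x0*b.x1 + a.x1*b.x0 := rfl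
@[simp] lemma mul_x2 (a b : EA) : (a * b).x2 = a.x0*b.x2 + a.x2*b.x0 := rfl
@[simp] lemma mul_x3 (a b : EA) : (a * b).x3 = a.x0*b.x3 + a.x3*b.x0 := rfl
@[simp] lemma mul_x4 (a b : EA) : (a * b).x4 = a.x0*b.x4 + a.x4*b.x0 + a.x1*b.x2 - a.x2*b.x1 := rfl
@[simp] lemma mul_x5 (a b : EA) : (a * b).x5 = a.x0*b.x5 + a.x5*b.x0 + a.x1*b.x3 - a.x3*b.x1 := rfl
@[simp] lemma mul_x6 (a b : EA) : (a * b).x6 = a.x0*b.x6 + a.x6*b.x0 + a.x2*b.x3 - a.x3*b.x2 := rfl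
@[simp] lemma mul_x7 (a b : EA) : (a * b).x7 = a.x0*b.x7 + a.x7*b.x0 + a.x1*b.x6 - a.x2*b.x5 + a.x3*b.x4 + a.x4*b.x3 - a.x5*b.x2 + a.x6*b.x1 := rfl
@[simp] lemma nsmulE_x0 (n : ℕ) (a : EA) : (nsmulE n a).x0 = (n : ℤ) * a.x0 := rfl
@[simp] lemma nsmulE_x1 (n : ℕ) (a : EA) : (nsmulE n a).x1 = (n : ℤ) * a.x1 := rfl
@[simp] lemma nsmulE_x2 (n : ℕ) (a : EA) : (nsmulE n a).x2 = (n : ℤ) * a.x2 := rfl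
@[simp] lemma nsmulE_x3 (n : ℕ) (a : EA) : (nsmulE n a).x3 = (n : ℤ) * a.x3 := rfl
@[simp] lemma nsmulE_x4 (n : ℕ) (a : EA) : (nsmulE n a).x4 = (n : ℤ) * a.x4 := rfl
@[simp] lemma nsmulE_x5 (n : ℕ) (a : EA) : (nsmulE n a).x5 = (n : ℤ) * a.x5 := rfl
@[simp] lemma nsmulE_x6 (n : ℕ) (a : EA) : (nsmulE n a).x6 = (n : ℤ) * a.x6 := rfl
@[simp] lemma nsmulE_x7 (n : ℕ) (a : EA) : (nsmulE n a).x7 = (n : ℤ) * a.x7 := rfl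
@[simp] lemma zsmulE_x0 (n : ℤ) (a : EA) : (zsmulE n a).x0 = n * a.x0 := rfl
@[simp] lemma zsmulE_x1 (n : ℤ) (a : EA) : (zsmulE n a).x1 = n * a.x1 := rfl
@[simp] lemma zsmulE_x2 (n : ℤ) (a : EA) : (zsmulE n a).x2 = n * a.x2 := rfl
@[simp] lemma zsmulE_x3 (n : ℤ) (a : EA) : (zsmulE n a).x3 = n * a.x3 := rfl
@[simp] lemma zsmulE_x4 (n : ℤ) (a : EA) : (zsmulE n a).x4 = n * a.x4 := rfl
@[simp] lemma zsmulE_x5 (n : ℤ) (a : EA) : (zsmulE n a).x5 = n * a.x5 := rfl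
@[simp] lemma zsmulE_x6 (n : ℤ) (a : EA) : (zsmulE n a).x6 = n * a.x6 := rfl
@[simp] lemma zsmulE_x7 (n : ℤ) (a : EA) : (zsmulE n a).x7 = n * a.x7 := rfl

/-- Natural number cast, in the `1`-coordinate. -/
def natCastE (n : ℕ) : EA := ⟨(n : ℤ), 0, 0, 0, 0, 0, 0, 0⟩

/-- Integer cast, in the `1`-coordinate. -/
def intCastE (n : ℤ) : EA := ⟨n, 0, 0, 0, 0, 0, 0, 0⟩

private lemma add_assoc' (a b c : EA) : a + b + c = a + (b + c) := by
  ext <;> simp <;> ring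
private lemma zero_add' (a : EA) : 0 + a = a := by ext <;> simp
private lemma add_zero' (a : EA) : a + 0 = a := by ext <;> simp
private lemma neg_add_cancel' (a : EA) : -a + a = 0 := by ext <;> simp
private lemma add_comm' (a b : EA) : a + b = b + a := by ext <;> simp <;> ring
private lemma nsmul_zero' (a : EA) : nsmulE 0 a = 0 := by ext <;> simp
private lemma nsmul_succ' (n : ℕ) (a : EA) : nsmulE (n + 1) a = nsmulE n a + a := by
  ext <;> simp <;> push_cast <;> ring
private lemma zsmul_zero'' (a : EA) : zsmulE 0 a = 0 := by ext <;> simp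
private lemma zsmul_succ'' (n : ℕ) (a : EA) :
    zsmulE (Int.ofNat n.succ) a = zsmulE (Int.ofNat n) a + a := by
  ext <;> simp [Int.ofNat_eq_natCast] <;> push_cast <;> ring
private lemma zsmul_neg'' (n : ℕ) (a : EA) :
    zsmulE (Int.negSucc n) a = -zsmulE (Int.ofNat n.succ) a := by
  ext <;> simp [Int.negSucc_eq, Int.ofNat_eq_natCast] <;> push_cast <;> ring
private lemma mul_assoc' (a b c : EA) : a * b * c = a * (b * c) := by
  ext <;> simp <;> ring
private lemma one_mul' (a : EA) : 1 * a = a := by ext <;> simp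
private lemma mul_one' (a : EA) : a * 1 = a := by ext <;> simp
private lemma left_distrib' (a b c : EA) : a * (b + c) = a * b + a * c := by
  ext <;> simp <;> ring
private lemma right_distrib' (a b c : EA) : (a + b) * c = a * c + b * c := by
  ext <;> simp <;> ring
private lemma zero_mul' (a : EA) : 0 * a = 0 := by ext <;> simp
private lemma mul_zero' (a : EA) : a * 0 = 0 := by ext <;> simp

instance addCommGroup : AddCommGroup EA where
  add := (· + ·)
  zero := 0
  neg := Neg.neg
  nsmul := nsmulE
  zsmul := zsmulE
  add_assoc := add_assoc'
  zero_add := zero_add'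
  add_zero := add_zero'
  neg_add_cancel := neg_add_cancel'
  add_comm := add_comm'
  nsmul_zero := nsmul_zero'
  nsmul_succ := nsmul_succ'
  zsmul_zero' := zsmul_zero''
  zsmul_succ' := zsmul_succ''
  zsmul_neg' := zsmul_neg''

private lemma natCast_zero' : natCastE 0 = 0 := by ext <;> simp [natCastE]
private lemma natCast_succ' (n : ℕ) : natCastE (n + 1) = natCastE n + 1 := by
  ext <;> simp [natCastE] <;> push_cast <;> ring
private lemma intCast_ofNat' (n : ℕ) : intCastE (Int.ofNat n) = natCastE n := by
  ext <;> simp [natCastE, intCastE, Int.ofNat_eq_natCast]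
private lemma intCast_negSucc' (n : ℕ) : intCastE (Int.negSucc n) = -natCastE (n + 1) := by
  ext <;> simp [natCastE, intCastE, Int.negSucc_eq] <;> push_cast <;> ring

instance ring : Ring EA where
  __ := addCommGroup
  one := 1
  mul := (· * ·)
  natCast := natCastE
  natCast_zero := natCast_zero'
  natCast_succ := natCast_succ'
  intCast := intCastE
  intCast_ofNat := intCast_ofNat'
  intCast_negSucc := intCast_negSucc'
  mul_assoc := mul_assoc'
  one_mul := one_mul'
  mul_one := mul_one'
  left_distrib := left_distrib'
  right_distrib := right_distrib'
  zero_mul := zero_mul'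
  mul_zero := mul_zero'


@[simp] lemma natCast_x0 (n : ℕ) : ((n : EA)).x0 = (n : ℤ) := rfl
@[simp] lemma natCast_x1 (n : ℕ) : ((n : EA)).x1 = 0 := rfl
@[simp] lemma natCast_x2 (n : ℕ) : ((n : EA)).x2 = 0 := rfl
@[simp] lemma natCast_x3 (n : ℕ) : ((n : EA)).x3 = 0 := rfl
@[simp] lemma natCast_x4 (n : ℕ) : ((n : EA)).x4 = 0 := rfl
@[simp] lemma natCast_x5 (n : ℕ) : ((n : EA)).x5 = 0 := rfl
@[simp] lemma natCast_x6 (n : ℕ) : ((n : EA)).x6 = 0 := rfl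
@[simp] lemma natCast_x7 (n : ℕ) : ((n : EA)).x7 = 0 := rfl
@[simp] lemma intCast_x0 (n : ℤ) : ((n : EA)).x0 = n := rfl
@[simp] lemma intCast_x1 (n : ℤ) : ((n : EA)).x1 = 0 := rfl
@[simp] lemma intCast_x2 (n : ℤ) : ((n : EA)).x2 = 0 := rfl
@[simp] lemma intCast_x3 (n : ℤ) : ((n : EA)).x3 = 0 := rfl
@[simp] lemma intCast_x4 (n : ℤ) : ((n : EA)).x4 = 0 := rfl
@[simp] lemma intCast_x5 (n : ℤ) : ((n : EA)).x5 = 0 := rfl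
@[simp] lemma intCast_x6 (n : ℤ) : ((n : EA)).x6 = 0 := rfl
@[simp] lemma intCast_x7 (n : ℤ) : ((n : EA)).x7 = 0 := rfl

@[simp] lemma zsmul_x0' (n : ℤ) (a : EA) : (n • a).x0 = n * a.x0 := rfl
@[simp] lemma zsmul_x1' (n : ℤ) (a : EA) : (n • a).x1 = n * a.x1 := rfl
@[simp] lemma zsmul_x2' (n : ℤ) (a : EA) : (n • a).x2 = n * a.x2 := rfl
@[simp] lemma zsmul_x3' (n : ℤ) (a : EA) : (n • a).x3 = n * a.x3 := rfl
@[simp] lemma zsmul_x4' (n : ℤ) (a : EA) : (n • a).x4 = n * a.x4 := rfl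
@[simp] lemma zsmul_x5' (n : ℤ) (a : EA) : (n • a).x5 = n * a.x5 := rfl
@[simp] lemma zsmul_x6' (n : ℤ) (a : EA) : (n • a).x6 = n * a.x6 := rfl
@[simp] lemma zsmul_x7' (n : ℤ) (a : EA) : (n • a).x7 = n * a.x7 := rfl

/-- The eight standard basis elements. -/
def B : Fin 8 → EA := ![⟨1,0,0,0,0,0,0,0⟩, ⟨0,1,0,0,0,0,0,0⟩, ⟨0,0,1,0,0,0,0,0⟩,
  ⟨0,0,0,1,0,0,0,0⟩, ⟨0,0,0,0,1,0,0,0⟩, ⟨0,0,0,0,0,1,0,0⟩,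
  ⟨0,0,0,0,0,0,1,0⟩, ⟨0,0,0,0,0,0,0,1⟩]

lemma addGroup_fg : AddGroup.FG EA := by
  rw [AddGroup.fg_iff]
  refine ⟨Set.range B, ?_, Set.finite_range B⟩
  rw [eq_top_iff]
  rintro x -
  have e0 : B 0 = ⟨1,0,0,0,0,0,0,0⟩ := rfl
  have e1 : B 1 = ⟨0,1,0,0,0,0,0,0⟩ := rfl
  have e2 : B 2 = ⟨0,0,1,0,0,0,0,0⟩ := rfl
  have e3 : B 3 = ⟨0,0,0,1,0,0,0,0⟩ := rfl
  have e4 : B 4 = ⟨0,0,0,0,1,0,0,0⟩ := rfl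
  have e5 : B 5 = ⟨0,0,0,0,0,1,0,0⟩ := rfl
  have e6 : B 6 = ⟨0,0,0,0,0,0,1,0⟩ := rfl
  have e7 : B 7 = ⟨0,0,0,0,0,0,0,1⟩ := rfl
  have hx : x = x.x0 • B 0 + x.x1 • B 1 + x.x2 • B 2 + x.x3 • B 3 + x.x4 • B 4 +
      x.x5 • B 5 + x.x6 • B 6 + x.x7 • B 7 := by
    rw [e0, e1, e2, e3, e4, e5, e6, e7]
    ext <;> simp
  rw [hx]
  have hm : ∀ i : Fin 8, B i ∈ AddSubgroup.closure (Set.range B) :=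
    fun i => AddSubgroup.subset_closure ⟨i, rfl⟩
  exact add_mem (add_mem (add_mem (add_mem (add_mem (add_mem (add_mem
    (zsmul_mem (hm 0) _) (zsmul_mem (hm 1) _)) (zsmul_mem (hm 2) _))
    (zsmul_mem (hm 3) _)) (zsmul_mem (hm 4) _)) (zsmul_mem (hm 5) _))
    (zsmul_mem (hm 6) _)) (zsmul_mem (hm 7) _)

instance : Module.Finite ℤ EA := Module.Finite.iff_addGroup_fg.mpr addGroup_fg

/-- Sufficient condition for centrality: no `e₁`, `e₂`, `e₃` components. -/
lemma mem_center (z : EA) (h1 : z.x1 = 0) (h2 : z.x2 = 0) (h3 : z.x3 = 0) :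
    z ∈ Subring.center EA := by
  rw [Subring.mem_center_iff]
  intro g
  ext <;> simp [h1, h2, h3] <;> ring

lemma centrallyEssential : IsCentrallyEssential EA := by
  intro a ha
  by_cases h0 : a.x0 = 0
  · by_cases h1 : a.x1 = 0
    · by_cases h2 : a.x2 = 0
      · by_cases h3 : a.x3 = 0
        · exact ⟨1, a, Subring.one_mem _, mem_center a h1 h2 h3,
            fun h => one_ne_zero (congrArg EA.x0 h), ha, mul_one a⟩
        · -- multiply by e₁e₂, landing on `a.x3 • e₁e₂e₃`
          refine ⟨⟨0,0,0,0,1,0,0,0⟩, a * ⟨0,0,0,0,1,0,0,0⟩, mem_center _ rfl rfl rfl,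
            mem_center _ (by simp) (by simp) (by simp),
            fun h => one_ne_zero (congrArg EA.x4 h), fun h => ?_, rfl⟩
          have h7 := congrArg EA.x7 h
          simp at h7
          exact h3 h7
      · -- multiply by e₁e₃
        refine ⟨⟨0,0,0,0,0,1,0,0⟩, a * ⟨0,0,0,0,0,1,0,0⟩, mem_center _ rfl rfl rfl,
          mem_center _ (by simp) (by simp) (by simp),
          fun h => one_ne_zero (congrArg EA.x5 h), fun h => ?_, rfl⟩
        have h7 := congrArg EA.x7 h
        simp at h7
        exact h2 h7
    · -- multiply by e₂e₃
      refine ⟨⟨0,0,0,0,0,0,1,0⟩, a * ⟨0,0,0,0,0,0,1,0⟩, mem_center _ rfl rfl rfl,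
        mem_center _ (by simp) (by simp) (by simp),
        fun h => one_ne_zero (congrArg EA.x6 h), fun h => ?_, rfl⟩
      have h7 := congrArg EA.x7 h
      simp at h7
      exact h1 h7
  · -- multiply by e₁e₂e₃
    refine ⟨⟨0,0,0,0,0,0,0,1⟩, a * ⟨0,0,0,0,0,0,0,1⟩, mem_center _ rfl rfl rfl,
      mem_center _ (by simp) (by simp) (by simp),
      fun h => one_ne_zero (congrArg EA.x7 h), fun h => ?_, rfl⟩
    have h7 := congrArg EA.x7 h
    simp at h7
    exact h0 h7

/-- The right ideal generated by `3e₃ + 2e₁e₃ + e₂e₃`. -/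
def I : AddSubgroup EA where
  carrier := {x | x.x0 = 0 ∧ x.x1 = 0 ∧ x.x2 = 0 ∧ x.x4 = 0 ∧
    (9 ∣ 2 * x.x3 - 3 * x.x5) ∧ (9 ∣ x.x3 - 3 * x.x6) ∧
    (9 ∣ x.x3 - x.x5 - x.x6 - 3 * x.x7)}
  add_mem' := by
    rintro a b ⟨_, _, _, _, _, _, _⟩ ⟨_, _, _, _, _, _, _⟩
    simp only [Set.mem_setOf_eq, add_x0, add_x1, add_x2, add_x3, add_x4, add_x5,
      add_x6, add_x7]
    omega
  zero_mem' :=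
    ⟨rfl, rfl, rfl, rfl, ⟨0, by norm_num⟩, ⟨0, by norm_num⟩, ⟨0, by norm_num⟩⟩
  neg_mem' := by
    rintro a ⟨_, _, _, _, _, _, _⟩
    simp only [Set.mem_setOf_eq, neg_x0, neg_x1, neg_x2, neg_x3, neg_x4, neg_x5,
      neg_x6, neg_x7]
    omega

lemma mem_I_iff (x : EA) : x ∈ I ↔ x.x0 = 0 ∧ x.x1 = 0 ∧ x.x2 = 0 ∧ x.x4 = 0 ∧
    (9 ∣ 2 * x.x3 - 3 * x.x5) ∧ (9 ∣ x.x3 - 3 * x.x6) ∧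
    (9 ∣ x.x3 - x.x5 - x.x6 - 3 * x.x7) := Iff.rfl

lemma I_rightIdeal : IsRightIdeal I := by
  intro x hx r
  obtain ⟨h0, h1, h2, h4, ⟨u, hu⟩, ⟨v, hv⟩, ⟨w, hw⟩⟩ := (mem_I_iff x).mp hx
  rw [mem_I_iff]
  refine ⟨?_, ?_, ?_, ?_, ?_, ?_, ?_⟩ <;>
  simp only [mul_x0, mul_x1, mul_x2, mul_x3, mul_x4, mul_x5, mul_x6, mul_x7,
    h0, h1, h2, h4, zero_mul, mul_zero, add_zero, zero_add, sub_zero, zero_sub, neg_zero]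
  · exact ⟨r.x0 * u + 3 * r.x1 * v + r.x1 * x.x6,
      by linear_combination r.x0 * hu + 3 * r.x1 * hv⟩
  · exact ⟨r.x0 * v + 3 * r.x2 * v + r.x2 * x.x6,
      by linear_combination (r.x0 + 3 * r.x2) * hv⟩
  · exact ⟨r.x0 * w + r.x1 * v + r.x2 * (-u + 3 * v + x.x6) - 3 * r.x4 * v - r.x4 * x.x6,
      by linear_combination r.x0 * hw + (r.x1 + 3 * r.x2 - 3 * r.x4) * hv - r.x2 * hu⟩

lemma I_not_leftIdeal : ¬ IsLeftIdeal I := by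
  intro h
  have hv : (⟨0,0,0,3,0,2,1,0⟩ : EA) ∈ I := by
    rw [mem_I_iff]
    decide
  have hd := ((mem_I_iff _).mp (h _ hv ⟨0,1,0,0,0,0,0,0⟩)).2.2.2.2.2.2
  exact absurd hd (by decide)

/-- The left ideal generated by `3e₃ - 2e₁e₃ - e₂e₃`. -/
def J : AddSubgroup EA where
  carrier := {x | x.x0 = 0 ∧ x.x1 = 0 ∧ x.x2 = 0 ∧ x.x4 = 0 ∧
    (9 ∣ 2 * x.x3 + 3 * x.x5) ∧ (9 ∣ x.x3 + 3 * x.x6) ∧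
    (9 ∣ x.x3 + x.x5 + x.x6 + 3 * x.x7)}
  add_mem' := by
    rintro a b ⟨_, _, _, _, _, _, _⟩ ⟨_, _, _, _, _, _, _⟩
    simp only [Set.mem_setOf_eq, add_x0, add_x1, add_x2, add_x3, add_x4, add_x5,
      add_x6, add_x7]
    omega
  zero_mem' :=
    ⟨rfl, rfl, rfl, rfl, ⟨0, by norm_num⟩, ⟨0, by norm_num⟩, ⟨0, by norm_num⟩⟩
  neg_mem' := by
    rintro a ⟨_, _, _, _, _, _, _⟩
    simp only [Set.mem_setOf_eq, neg_x0, neg_x1, neg_x2, neg_x3, neg_x4, neg_x5,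
      neg_x6, neg_x7]
    omega

lemma mem_J_iff (x : EA) : x ∈ J ↔ x.x0 = 0 ∧ x.x1 = 0 ∧ x.x2 = 0 ∧ x.x4 = 0 ∧
    (9 ∣ 2 * x.x3 + 3 * x.x5) ∧ (9 ∣ x.x3 + 3 * x.x6) ∧
    (9 ∣ x.x3 + x.x5 + x.x6 + 3 * x.x7) := Iff.rfl

lemma J_leftIdeal : IsLeftIdeal J := by
  intro x hx r
  obtain ⟨h0, h1, h2, h4, ⟨u, hu⟩, ⟨v, hv⟩, ⟨w, hw⟩⟩ := (mem_J_iff x).mp hx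
  rw [mem_J_iff]
  refine ⟨?_, ?_, ?_, ?_, ?_, ?_, ?_⟩ <;>
  simp only [mul_x0, mul_x1, mul_x2, mul_x3, mul_x4, mul_x5, mul_x6, mul_x7,
    h0, h1, h2, h4, zero_mul, mul_zero, add_zero, zero_add, sub_zero, zero_sub, neg_zero]
  · exact ⟨r.x0 * u + 3 * r.x1 * v - r.x1 * x.x6,
      by linear_combination r.x0 * hu + 3 * r.x1 * hv⟩
  · exact ⟨r.x0 * v + 3 * r.x2 * v - r.x2 * x.x6,
      by linear_combination (r.x0 + 3 * r.x2) * hv⟩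
  · exact ⟨r.x0 * w + r.x1 * v + r.x2 * (-u + 3 * v - x.x6) + 3 * r.x4 * v - r.x4 * x.x6,
      by linear_combination r.x0 * hw + (r.x1 + 3 * r.x2 + 3 * r.x4) * hv - r.x2 * hu⟩

lemma J_not_rightIdeal : ¬ IsRightIdeal J := by
  intro h
  have hv : (⟨0,0,0,3,0,-2,-1,0⟩ : EA) ∈ J := by
    rw [mem_J_iff]
    decide
  have hd := ((mem_J_iff _).mp (h _ hv ⟨0,1,0,0,0,0,0,0⟩)).2.2.2.2.2.2
  exact absurd hd (by decide)

lemma torsionFree : ∀ (n : ℤ) (r : EA), n ≠ 0 → n • r = 0 → r = 0 := by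
  intro n r hn h
  have h0 : n * r.x0 = 0 := congrArg EA.x0 h
  have h1 : n * r.x1 = 0 := congrArg EA.x1 h
  have h2 : n * r.x2 = 0 := congrArg EA.x2 h
  have h3 : n * r.x3 = 0 := congrArg EA.x3 h
  have h4 : n * r.x4 = 0 := congrArg EA.x4 h
  have h5 : n * r.x5 = 0 := congrArg EA.x5 h
  have h6 : n * r.x6 = 0 := congrArg EA.x6 h
  have h7 : n * r.x7 = 0 := congrArg EA.x7 h
  ext
  · exact (mul_eq_zero.mp h0).resolve_left hn
  · exact (mul_eq_zero.mp h1).resolve_left hn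
  · exact (mul_eq_zero.mp h2).resolve_left hn
  · exact (mul_eq_zero.mp h3).resolve_left hn
  · exact (mul_eq_zero.mp h4).resolve_left hn
  · exact (mul_eq_zero.mp h5).resolve_left hn
  · exact (mul_eq_zero.mp h6).resolve_left hn
  · exact (mul_eq_zero.mp h7).resolve_left hn

end EA

/-- Remark 3.4: there exists a centrally essential torsion-free ring of finite rank
which is neither right invariant nor left invariant: it has a right ideal which is
not a two-sided ideal and a left ideal which is not a two-sided ideal. -/
theorem exists_centrallyEssential_tffr_not_invariant :
    ∃ (S : Type) (_ : Ring S),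
      (∀ (n : ℤ) (r : S), n ≠ 0 → n • r = 0 → r = 0) ∧
      FiniteDimensional ℚ (ℚ ⊗[ℤ] S) ∧
      IsCentrallyEssential S ∧
      (∃ I : AddSubgroup S, IsRightIdeal I ∧ ¬ IsLeftIdeal I) ∧
      (∃ J : AddSubgroup S, IsLeftIdeal J ∧ ¬ IsRightIdeal J) := by
  exact ⟨EA, inferInstance, EA.torsionFree, inferInstance, EA.centrallyEssential,
    ⟨EA.I, EA.I_rightIdeal, EA.I_not_leftIdeal⟩, ⟨EA.J, EA.J_leftIdeal, EA.J_not_rightIdeal⟩⟩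
end
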